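/- arXiv:2003.00233 — 6 statements merged into one kernel-verified Lean document; each statement's English description precedes it below -/
import Mathlib

section
/- Let X be a p×q real matrix of rank r. If Y is a p×q matrix whose column space is contained in the column space of X, or whose row space is contained in the row space of X, then for all sufficiently small t > 0 the matrix X + tY has rank exactly r. -/
/-!
If `C(Y) ⊆ C(X)` then `Y = X B` for a square matrix `B`, so `X + tY = X (1 + tB)`. Since
`det (1 + tB)` is continuous in `t` and equals `1` at `t = 0`, the factor `1 + tB` is invertible
for small `t`, and multiplying by an invertible matrix preserves rank. The row-space case is the
column-space case for the transposes.
-/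

open Matrix

/-- The column space (span of the columns) of a `p × q` real matrix in `ℝ^p`. -/
def colSpace5 (p q : ℕ) (M : Matrix (Fin p) (Fin q) ℝ) : Submodule ℝ (Fin p → ℝ) :=
  Submodule.span ℝ (Set.range fun j : Fin q => fun i => M i j)

/-- The row space (span of the rows) of a `p × q` real matrix in `ℝ^q`. -/
def rowSpace5 (p q : ℕ) (M : Matrix (Fin p) (Fin q) ℝ) : Submodule ℝ (Fin q → ℝ) :=
  Submodule.span ℝ (Set.range fun i : Fin p => fun j => M i j)

open Filter Topology

namespace Matrix

variable {m n K : Type*} [Fintype n]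

theorem exists_eq_mul_of_range_mulVecLin_le {R : Type*} [CommSemiring R] {X Y : Matrix m n R}
    (h : LinearMap.range Y.mulVecLin ≤ LinearMap.range X.mulVecLin) :
    ∃ B : Matrix n n R, Y = X * B := by
  have hcol : ∀ j, ∃ b : n → R, X *ᵥ b = Y.col j := fun j ↦
    h <| by rw [range_mulVecLin]; exact Submodule.subset_span ⟨j, rfl⟩
  choose b hb using hcol
  refine ⟨(of b)ᵀ, ?_⟩
  ext i j
  simpa [mul_apply, mulVec, dotProduct] using (congrFun (hb j) i).symm

theorem eventually_isUnit_det_one_add_smul [Field K] [TopologicalSpace K] [IsTopologicalRing K]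
    [T1Space K] [DecidableEq n] (B : Matrix n n K) :
    ∀ᶠ t in 𝓝 (0 : K), IsUnit (1 + t • B).det := by
  have hcont : Continuous fun t : K ↦ (1 + t • B).det :=
    (continuous_const.add (continuous_id.smul continuous_const)).matrix_det
  filter_upwards [hcont.continuousAt.eventually_ne (by simp : (1 + (0 : K) • B).det ≠ 0)]
    with t ht
  exact ht.isUnit

variable [Field K] [TopologicalSpace K] [IsTopologicalRing K] [T1Space K]

theorem eventually_rank_add_smul_eq_of_range_mulVecLin_le {X Y : Matrix m n K}
    (h : LinearMap.range Y.mulVecLin ≤ LinearMap.range X.mulVecLin) :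
    ∀ᶠ t in 𝓝 (0 : K), (X + t • Y).rank = X.rank := by
  classical
  obtain ⟨B, rfl⟩ := exists_eq_mul_of_range_mulVecLin_le h
  filter_upwards [eventually_isUnit_det_one_add_smul B] with t ht
  rw [← rank_mul_eq_left_of_isUnit_det _ X ht, Matrix.mul_add, Matrix.mul_one, Matrix.mul_smul]

theorem eventually_rank_add_smul_eq_of_range_vecMulLinear_le [Fintype m] {X Y : Matrix m n K}
    (h : LinearMap.range Y.vecMulLinear ≤ LinearMap.range X.vecMulLinear) :
    ∀ᶠ t in 𝓝 (0 : K), (X + t • Y).rank = X.rank := by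
  rw [← mulVecLin_transpose, ← mulVecLin_transpose] at h
  filter_upwards [eventually_rank_add_smul_eq_of_range_mulVecLin_le h] with t ht
  rwa [← rank_transpose, transpose_add, transpose_smul, ← rank_transpose X]

end Matrix

theorem colSpace5_eq_range_mulVecLin (p q : ℕ) (M : Matrix (Fin p) (Fin q) ℝ) :
    colSpace5 p q M = LinearMap.range M.mulVecLin :=
  (range_mulVecLin M).symm

theorem rowSpace5_eq_range_vecMulLinear (p q : ℕ) (M : Matrix (Fin p) (Fin q) ℝ) :
    rowSpace5 p q M = LinearMap.range M.vecMulLinear :=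
  (range_vecMulLinear M).symm

/-- If `X` has rank `r` and the column space of `Y` is contained in that of `X`, or the row
space of `Y` is contained in that of `X`, then `X + tY` has rank exactly `r` for all
sufficiently small `t > 0`. -/
theorem stmt5 (p q r : ℕ) (X Y : Matrix (Fin p) (Fin q) ℝ) (hX : X.rank = r)
    (hY : colSpace5 p q Y ≤ colSpace5 p q X ∨ rowSpace5 p q Y ≤ rowSpace5 p q X) :
    ∃ ε > (0 : ℝ), ∀ t : ℝ, 0 < t → t < ε → (X + t • Y).rank = r := by
  have hrank : ∀ᶠ t in 𝓝 (0 : ℝ), (X + t • Y).rank = r := by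
    rw [← hX]
    rcases hY with hcol | hrow
    · rw [colSpace5_eq_range_mulVecLin, colSpace5_eq_range_mulVecLin] at hcol
      exact eventually_rank_add_smul_eq_of_range_mulVecLin_le hcol
    · rw [rowSpace5_eq_range_vecMulLinear, rowSpace5_eq_range_vecMulLinear] at hrow
      exact eventually_rank_add_smul_eq_of_range_vecMulLinear_le hrow
  obtain ⟨ε, hε, hball⟩ := Metric.eventually_nhds_iff.mp hrank
  exact ⟨ε, hε, fun t ht htε ↦ hball (by rwa [Real.dist_0_eq_abs, abs_of_pos ht])⟩
end

section
/- Let X : U → ℝ^{pq} be the parametrization X(a,λ) = (a, a·λ), where a is a p×r matrix of rank r and λ is an r×(q-r) matrix. Then the induced metric (first fundamental form) is the block matrix Ĝ = [[R_{1+λλᵀ}, L_a R_{λᵀ}],[L_{aᵀ} R_λ, L_{aᵀa}]]; concretely Ĝ((c₁,μ₁),(c₂,μ₂)) = tr(c₁ᵀ(c₂ + c₂λλᵀ + aμ₂λᵀ)) + tr(μ₁ᵀ(aᵀaμ₂ + aᵀc₂λ)). -/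
open Matrix

/-! For `⟨x, y⟩ = tr(xᵀy)` the adjoints are `R_λ* = R_{λᵀ}` and `L_a* = L_{aᵀ}`; moving every
`λ` and `a` of `⟨c₁λ + aμ₁, c₂λ + aμ₂⟩` to the right-hand slot yields the block form of `Ĝ`. -/

namespace Matrix

variable {m n k R : Type*} [Fintype m] [Fintype n] [Fintype k] [CommSemiring R]

theorem trace_transpose_mul_mul_right (x : Matrix m n R) (l : Matrix n k R) (y : Matrix m k R) :
    ((x * l)ᵀ * y).trace = (xᵀ * (y * lᵀ)).trace := by
  rw [transpose_mul, Matrix.mul_assoc, trace_mul_comm, Matrix.mul_assoc]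

theorem trace_transpose_mul_mul_left (a : Matrix m n R) (μ : Matrix n k R) (y : Matrix m k R) :
    ((a * μ)ᵀ * y).trace = (μᵀ * (aᵀ * y)).trace := by
  rw [transpose_mul, Matrix.mul_assoc]

end Matrix

theorem stmt8_general (p q r : ℕ)
    (a : Matrix (Fin p) (Fin r) ℝ)
    (lam : Matrix (Fin r) (Fin (q - r)) ℝ)
    (c₁ c₂ : Matrix (Fin p) (Fin r) ℝ) (μ₁ μ₂ : Matrix (Fin r) (Fin (q - r)) ℝ) :
    (c₁ᵀ * c₂).trace + ((c₁ * lam + a * μ₁)ᵀ * (c₂ * lam + a * μ₂)).trace =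
      (c₁ᵀ * (c₂ + c₂ * lam * lamᵀ + a * μ₂ * lamᵀ)).trace +
        (μ₁ᵀ * (aᵀ * a * μ₂ + aᵀ * c₂ * lam)).trace := by
  rw [transpose_add, Matrix.add_mul, trace_add, trace_transpose_mul_mul_right,
    trace_transpose_mul_mul_left]
  simp only [Matrix.mul_add, Matrix.add_mul, trace_add, Matrix.mul_assoc]
  ring

/-- For the parametrization `X(a,λ) = (a, aλ)` of rank-`r` matrices, with derivative
`DX(c,μ) = (c, cλ + aμ)`, the induced metric
`Ĝ((c₁,μ₁),(c₂,μ₂)) = ⟨DX(c₁,μ₁), DX(c₂,μ₂)⟩` (Frobenius inner product) equals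
`tr(c₁ᵀ(c₂ + c₂λλᵀ + aμ₂λᵀ)) + tr(μ₁ᵀ(aᵀaμ₂ + aᵀc₂λ))`. -/
theorem stmt8 (p q r : ℕ) (hr : r ≤ q)
    (a : Matrix (Fin p) (Fin r) ℝ) (ha : a.rank = r)
    (lam : Matrix (Fin r) (Fin (q - r)) ℝ)
    (c₁ c₂ : Matrix (Fin p) (Fin r) ℝ) (μ₁ μ₂ : Matrix (Fin r) (Fin (q - r)) ℝ) :
    (c₁ᵀ * c₂).trace + ((c₁ * lam + a * μ₁)ᵀ * (c₂ * lam + a * μ₂)).trace =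
      (c₁ᵀ * (c₂ + c₂ * lam * lamᵀ + a * μ₂ * lamᵀ)).trace +
        (μ₁ᵀ * (aᵀ * a * μ₂ + aᵀ * c₂ * lam)).trace :=
  stmt8_general p q r a lam c₁ c₂ μ₁ μ₂
end

section
/- With X(a,λ) = (a, aλ) parametrizing rank-r matrices (a of maximal rank r), a p×q matrix N is normal to the image of X at (a,λ) iff N has the form (wλᵀ, -w) where the columns of the p×(q-r) matrix w lie in the kernel of aᵀ; equivalently, ⟨DX(c,μ), (wλᵀ, -w)⟩ = 0 for all (c,μ) exactly when aᵀw = 0. -/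
open Matrix

namespace Matrix

theorem eq_zero_of_forall_trace_transpose_mul_eq_zero {m n : Type*} [Fintype m] [Fintype n]
    {M : Matrix m n ℝ} (h : ∀ c : Matrix m n ℝ, (cᵀ * M).trace = 0) : M = 0 :=
  trace_conjTranspose_mul_self_eq_zero_iff.mp <| by
    simpa only [conjTranspose_eq_transpose_of_trivial] using h M

variable {R : Type*} [CommRing R] {m k l : Type*} [Fintype m] [Fintype k] [Fintype l]

/-- Adjoint form of `⟨DX(c,μ), (N₁, N₂)⟩` at `X(a,λ)`. -/
theorem trace_pairing_tangent_eq (a : Matrix m k R) (lam : Matrix k l R)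
    (N₁ : Matrix m k R) (N₂ : Matrix m l R) (c : Matrix m k R) (μ : Matrix k l R) :
    (cᵀ * N₁).trace + ((c * lam + a * μ)ᵀ * N₂).trace
      = (cᵀ * (N₁ + N₂ * lamᵀ)).trace + (μᵀ * (aᵀ * N₂)).trace := by
  have hc : ((c * lam)ᵀ * N₂).trace = (cᵀ * (N₂ * lamᵀ)).trace := by
    rw [transpose_mul, Matrix.mul_assoc, trace_mul_comm, Matrix.mul_assoc]
  have hμ : ((a * μ)ᵀ * N₂).trace = (μᵀ * (aᵀ * N₂)).trace := by
    rw [transpose_mul, Matrix.mul_assoc]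
  rw [transpose_add, Matrix.add_mul, trace_add, hc, hμ, Matrix.mul_add, trace_add, add_assoc]

end Matrix

theorem forall_trace_pairing_tangent_eq_zero_iff {m k l : Type*} [Fintype m] [Fintype k]
    [Fintype l] (a : Matrix m k ℝ) (lam : Matrix k l ℝ) (N₁ : Matrix m k ℝ) (N₂ : Matrix m l ℝ) :
    (∀ (c : Matrix m k ℝ) (μ : Matrix k l ℝ),
        (cᵀ * N₁).trace + ((c * lam + a * μ)ᵀ * N₂).trace = 0) ↔
      N₁ + N₂ * lamᵀ = 0 ∧ aᵀ * N₂ = 0 := by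
  simp only [trace_pairing_tangent_eq]
  refine ⟨fun h => ⟨?_, ?_⟩, fun ⟨h₁, h₂⟩ c μ => by simp [h₁, h₂]⟩
  · exact eq_zero_of_forall_trace_transpose_mul_eq_zero fun c => by simpa using h c 0
  · exact eq_zero_of_forall_trace_transpose_mul_eq_zero fun μ => by simpa using h 0 μ

theorem stmt9_general (p q r : ℕ)
    (a : Matrix (Fin p) (Fin r) ℝ)
    (lam : Matrix (Fin r) (Fin (q - r)) ℝ) :
    (∀ (N₁ : Matrix (Fin p) (Fin r) ℝ) (N₂ : Matrix (Fin p) (Fin (q - r)) ℝ),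
      (∀ (c : Matrix (Fin p) (Fin r) ℝ) (μ : Matrix (Fin r) (Fin (q - r)) ℝ),
          (cᵀ * N₁).trace + ((c * lam + a * μ)ᵀ * N₂).trace = 0) ↔
        ∃ w : Matrix (Fin p) (Fin (q - r)) ℝ, aᵀ * w = 0 ∧ N₁ = w * lamᵀ ∧ N₂ = -w) ∧
    (∀ w : Matrix (Fin p) (Fin (q - r)) ℝ,
      (∀ (c : Matrix (Fin p) (Fin r) ℝ) (μ : Matrix (Fin r) (Fin (q - r)) ℝ),
          (cᵀ * (w * lamᵀ)).trace + ((c * lam + a * μ)ᵀ * (-w)).trace = 0) ↔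
        aᵀ * w = 0) := by
  refine ⟨fun N₁ N₂ => ?_, fun w => ?_⟩
  · rw [forall_trace_pairing_tangent_eq_zero_iff]
    constructor
    · rintro ⟨h₁, h₂⟩
      refine ⟨-N₂, by simp [h₂], ?_, by simp⟩
      simpa using eq_neg_of_add_eq_zero_left h₁
    · rintro ⟨w, hw, rfl, rfl⟩
      simp [hw]
  · rw [forall_trace_pairing_tangent_eq_zero_iff]
    simp

/-- With `X(a,λ) = (a, aλ)` and `DX(c,μ) = (c, cλ + aμ)`, a matrix `N = (N₁, N₂)` is normal
to the image of `X` at `(a,λ)` (w.r.t. `⟨A,B⟩ = tr(AᵀB)` on each block) iff it has the form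
`(wλᵀ, -w)` with `aᵀw = 0`; equivalently, `⟨DX(c,μ), (wλᵀ, -w)⟩ = 0` for all `(c,μ)` exactly
when `aᵀw = 0`. -/
theorem stmt9 (p q r : ℕ) (hr : r ≤ q)
    (a : Matrix (Fin p) (Fin r) ℝ) (ha : a.rank = r)
    (lam : Matrix (Fin r) (Fin (q - r)) ℝ) :
    (∀ (N₁ : Matrix (Fin p) (Fin r) ℝ) (N₂ : Matrix (Fin p) (Fin (q - r)) ℝ),
      (∀ (c : Matrix (Fin p) (Fin r) ℝ) (μ : Matrix (Fin r) (Fin (q - r)) ℝ),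
          (cᵀ * N₁).trace + ((c * lam + a * μ)ᵀ * N₂).trace = 0) ↔
        ∃ w : Matrix (Fin p) (Fin (q - r)) ℝ, aᵀ * w = 0 ∧ N₁ = w * lamᵀ ∧ N₂ = -w) ∧
    (∀ w : Matrix (Fin p) (Fin (q - r)) ℝ,
      (∀ (c : Matrix (Fin p) (Fin r) ℝ) (μ : Matrix (Fin r) (Fin (q - r)) ℝ),
          (cᵀ * (w * lamᵀ)).trace + ((c * lam + a * μ)ᵀ * (-w)).trace = 0) ↔
        aᵀ * w = 0) :=
  stmt9_general p q r a lam
end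

section
/- For the metric Ĝ with blocks G = R_{1+λλᵀ}, B = L_a R_{λᵀ}, D = L_{aᵀa} (a of rank r), the inverse metric is given blockwise by Ĝ^{-1} = [[1 - L_{P_a} R_{λλᵀ(1+λλᵀ)^{-1}}, -L_{a(aᵀa)^{-1}} R_{λᵀ}],[R_λ L_{(aᵀa)^{-1} aᵀ}, L_{(aᵀa)^{-1}} R_{1+λᵀλ}]], where P_a = 1 - a(aᵀa)^{-1}aᵀ is the orthogonal projection onto the kernel of aᵀ. -/
/-!
With `N = (aᵀa)⁻¹`, everything follows from `N aᵀ a = 1`: it makes `P_a = 1 - a N aᵀ` annihilate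
`a`, and cancels `N aᵀ` against `a` elsewhere. In addition, `1 + λλᵀ` commutes with `λλᵀ`, so
`(1 + λλᵀ) λλᵀ (1 + λλᵀ)⁻¹ = λλᵀ`. Once the products are expanded (the composition rules for `L`
and `R` are just associativity), both components of `Ĝ⁻¹ Ĝ (c, μ)` reduce to `(c, μ)`.
-/

open Matrix

section Units

variable {n : Type*} [Fintype n] [DecidableEq n]

lemma Matrix.isUnit_of_rank_eq_card {K : Type*} [Field K] {A : Matrix n n K}
    (h : A.rank = Fintype.card n) : IsUnit A := by
  have hrange : LinearMap.range A.mulVecLin = ⊤ :=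
    Submodule.eq_top_of_finrank_eq (by rw [← rank, h, Module.finrank_fintype_fun_eq_card])
  rw [← mulVec_surjective_iff_isUnit]
  exact LinearMap.range_eq_top.mp hrange

lemma Matrix.isUnit_one_add_mul_transpose_self {m : Type*} [Fintype m] (A : Matrix n m ℝ) :
    IsUnit (1 + A * Aᵀ) :=
  (PosDef.one.add_posSemidef (posSemidef_self_mul_conjTranspose A)).isUnit

lemma Matrix.isUnit_transpose_mul_self_of_rank_eq {m : Type*} [Fintype m] {A : Matrix m n ℝ}
    (h : A.rank = Fintype.card n) : IsUnit (Aᵀ * A) :=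
  isUnit_of_rank_eq_card (by rw [rank_transpose_mul_self, h])

end Units

lemma Matrix.one_add_mul_mul_inv_one_add {n R : Type*} [Fintype n] [DecidableEq n] [CommRing R]
    (X : Matrix n n R) (h : IsUnit (1 + X)) : (1 + X) * (X * (1 + X)⁻¹) = X := by
  have hcomm : Commute (1 + X) X := (Commute.one_left X).add_left (Commute.refl X)
  rw [← Matrix.mul_assoc, hcomm.eq, Matrix.mul_assoc,
    mul_nonsing_inv _ ((isUnit_iff_isUnit_det _).mp h), Matrix.mul_one]

section BlockInverse

variable {m n k R : Type*} [Fintype m] [Fintype n] [Fintype k] [DecidableEq n] [CommRing R]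
  {a : Matrix m n R} {N : Matrix n n R}

lemma Matrix.mul_transpose_mul_mul_cancel (hN : N * (aᵀ * a) = 1) {l : Type*} (X : Matrix n l R) :
    N * (aᵀ * (a * X)) = X := by
  rw [← Matrix.mul_assoc aᵀ, ← Matrix.mul_assoc, hN, Matrix.one_mul]

lemma Matrix.one_sub_mul_mul_transpose_mul_self [DecidableEq m] (hN : N * (aᵀ * a) = 1) :
    (1 - a * N * aᵀ) * a = 0 := by
  rw [Matrix.sub_mul, Matrix.one_mul, Matrix.mul_assoc, Matrix.mul_assoc, hN, Matrix.mul_one,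
    sub_self]

variable (hN : N * (aᵀ * a) = 1) (lam : Matrix n k R) (c : Matrix m n R) (μ : Matrix n k R)
include hN

lemma inverseMetric_mul_metric_fst [DecidableEq m] {K : Matrix n n R}
    (hK : (1 + lam * lamᵀ) * K = lam * lamᵀ) :
    (c * (1 + lam * lamᵀ) + a * μ * lamᵀ) -
        (1 - a * N * aᵀ) * (c * (1 + lam * lamᵀ) + a * μ * lamᵀ) * K -
        a * N * (aᵀ * c * lam + aᵀ * a * μ) * lamᵀ = c := by
  have hPa := Matrix.one_sub_mul_mul_transpose_mul_self hN
  have hPG : (1 - a * N * aᵀ) * (c * (1 + lam * lamᵀ) + a * μ * lamᵀ) * K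
      = (1 - a * N * aᵀ) * (c * (lam * lamᵀ)) := by
    rw [Matrix.mul_add, ← Matrix.mul_assoc _ (a * μ), ← Matrix.mul_assoc _ a, hPa,
      Matrix.zero_mul, Matrix.zero_mul, add_zero, Matrix.mul_assoc _ (c * _), Matrix.mul_assoc c,
      hK]
  rw [hPG]
  simp only [Matrix.mul_add, Matrix.add_mul, Matrix.sub_mul, Matrix.mul_one,
    Matrix.one_mul, Matrix.mul_assoc, mul_transpose_mul_mul_cancel hN]
  abel

lemma inverseMetric_mul_metric_snd [DecidableEq k] :
    -(N * aᵀ * (c * (1 + lam * lamᵀ) + a * μ * lamᵀ) * lam) +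
        N * (aᵀ * c * lam + aᵀ * a * μ) * (1 + lamᵀ * lam) = μ := by
  simp only [Matrix.mul_add, Matrix.add_mul, Matrix.mul_one, Matrix.mul_assoc,
    mul_transpose_mul_mul_cancel hN]
  abel

end BlockInverse

theorem stmt11_general (p q r : ℕ)
    (a : Matrix (Fin p) (Fin r) ℝ) (ha : a.rank = r)
    (lam : Matrix (Fin r) (Fin (q - r)) ℝ)
    (c : Matrix (Fin p) (Fin r) ℝ) (μ : Matrix (Fin r) (Fin (q - r)) ℝ) :
    (c * (1 + lam * lamᵀ) + a * μ * lamᵀ) -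
        (1 - a * (aᵀ * a)⁻¹ * aᵀ) * (c * (1 + lam * lamᵀ) + a * μ * lamᵀ) *
          (lam * lamᵀ * (1 + lam * lamᵀ)⁻¹) -
        a * (aᵀ * a)⁻¹ * (aᵀ * c * lam + aᵀ * a * μ) * lamᵀ = c ∧
    -((aᵀ * a)⁻¹ * aᵀ * (c * (1 + lam * lamᵀ) + a * μ * lamᵀ) * lam) +
        (aᵀ * a)⁻¹ * (aᵀ * c * lam + aᵀ * a * μ) * (1 + lamᵀ * lam) = μ := by
  have hGram : IsUnit (aᵀ * a) := isUnit_transpose_mul_self_of_rank_eq (by rwa [Fintype.card_fin])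
  have hN : (aᵀ * a)⁻¹ * (aᵀ * a) = 1 := nonsing_inv_mul _ ((isUnit_iff_isUnit_det _).mp hGram)
  have hK := one_add_mul_mul_inv_one_add (lam * lamᵀ) (isUnit_one_add_mul_transpose_self lam)
  exact ⟨inverseMetric_mul_metric_fst hN lam c μ hK, inverseMetric_mul_metric_snd hN lam c μ⟩

/-- For the metric operator `Ĝ(c,μ) = (c(1+λλᵀ) + aμλᵀ, aᵀcλ + aᵀaμ)` (blocks
`G = R_{1+λλᵀ}`, `B = L_a R_{λᵀ}`, `D = L_{aᵀa}`), the inverse metric is given blockwise by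
`Ĝ⁻¹ = [[1 - L_{P_a} R_{λλᵀ(1+λλᵀ)⁻¹}, -L_{a(aᵀa)⁻¹} R_{λᵀ}], [-R_λ L_{(aᵀa)⁻¹aᵀ}, L_{(aᵀa)⁻¹} R_{1+λᵀλ}]]`
(the bottom-left block being `-ρBᵀG⁻¹` as in the general block-inverse formula), with
`P_a = 1 - a(aᵀa)⁻¹aᵀ` the orthogonal projection onto the kernel of `aᵀ`:
one verifies `Ĝ⁻¹ ⬝ Ĝ = 1` componentwise. -/
theorem stmt11 (p q r : ℕ) (hr : r ≤ q)
    (a : Matrix (Fin p) (Fin r) ℝ) (ha : a.rank = r)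
    (lam : Matrix (Fin r) (Fin (q - r)) ℝ)
    (c : Matrix (Fin p) (Fin r) ℝ) (μ : Matrix (Fin r) (Fin (q - r)) ℝ) :
    (c * (1 + lam * lamᵀ) + a * μ * lamᵀ) -
        (1 - a * (aᵀ * a)⁻¹ * aᵀ) * (c * (1 + lam * lamᵀ) + a * μ * lamᵀ) *
          (lam * lamᵀ * (1 + lam * lamᵀ)⁻¹) -
        a * (aᵀ * a)⁻¹ * (aᵀ * c * lam + aᵀ * a * μ) * lamᵀ = c ∧
    -((aᵀ * a)⁻¹ * aᵀ * (c * (1 + lam * lamᵀ) + a * μ * lamᵀ) * lam) +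
        (aᵀ * a)⁻¹ * (aᵀ * c * lam + aᵀ * a * μ) * (1 + lamᵀ * lam) = μ :=
  stmt11_general p q r a ha lam c μ
end

section
/- For u = x₁x₄ - x₂x₃ - (y₁y₄ - y₂y₃) and v = x₁y₄ + x₄y₁ - (x₂y₃ + x₃y₂) on ℝ⁸ (real and imaginary part of the determinant of a complex 2×2 matrix), one has uᵢuⱼu_{ij} = 2u, vᵢvⱼv_{ij} = 2v, uᵢvⱼu_{ij} = -2v, and vᵢvⱼu_{ij} = 2u (summation over repeated indices, where subscripts denote partial derivatives). -/
/-!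
Both `u` and `v` are quadratic forms `z ↦ ⟪z, T z⟫ / 2` of symmetric operators `U`, `V` (their
Hessians), so `∇u = U x`, `(u_{ij}) = U`, and each contraction in the statement is
`⟪F x, G (H x)⟫` with `F, G, H ∈ {U, V}`. The Hessians of the real and imaginary parts of the
`2 × 2` determinant satisfy the Clifford relations `U² = V² = 1`, `VU = -UV`; a symmetric
involution is an isometry, and the four identities follow, e.g.
`⟪U x, V (U x)⟫ = -⟪U x, U (V x)⟫ = -⟪x, V x⟫ = -2 v x`.
-/

/-- First partial derivative in the `i`-th coordinate direction. -/
noncomputable def D15 (i : Fin 8) (f : EuclideanSpace ℝ (Fin 8) → ℝ)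
    (x : EuclideanSpace ℝ (Fin 8)) : ℝ :=
  fderiv ℝ f x (EuclideanSpace.single i 1)

/-- Second partial derivative `∂ᵢ∂ⱼ`. -/
noncomputable def D215 (i j : Fin 8) (f : EuclideanSpace ℝ (Fin 8) → ℝ)
    (x : EuclideanSpace ℝ (Fin 8)) : ℝ :=
  fderiv ℝ (fun y => fderiv ℝ f y (EuclideanSpace.single j 1)) x (EuclideanSpace.single i 1)

open scoped RealInnerProductSpace

noncomputable section

section QuadraticForm

variable {E : Type*} [NormedAddCommGroup E] [InnerProductSpace ℝ E] {T : E →L[ℝ] E}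

def halfQuadratic (T : E →L[ℝ] E) (z : E) : ℝ := ⟪z, T z⟫ / 2

theorem inner_map_map_of_isSymmetric_of_mul_self_eq_one (hT : (T : E →ₗ[ℝ] E).IsSymmetric)
    (hTT : T * T = 1) (x y : E) : ⟪T x, T y⟫ = ⟪x, y⟫ :=
  calc ⟪T x, T y⟫ = ⟪x, (T * T) y⟫ := hT x (T y)
    _ = ⟪x, y⟫ := by rw [hTT, one_apply_eq_self]

theorem two_mul_halfQuadratic (x : E) : 2 * halfQuadratic T x = ⟪x, T x⟫ :=
  mul_div_cancel₀ _ two_ne_zero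

theorem hasFDerivAt_halfQuadratic (hT : (T : E →ₗ[ℝ] E).IsSymmetric) (y : E) :
    HasFDerivAt (halfQuadratic T) (innerSL ℝ (T y)) y := by
  have h := ((hasFDerivAt_id y).inner ℝ T.hasFDerivAt).mul_const (2⁻¹ : ℝ)
  simp only [id, ← div_eq_mul_inv] at h
  refine h.congr_fderiv (ContinuousLinearMap.ext fun v => ?_)
  have hsymm : ⟪T v, y⟫ = ⟪v, T y⟫ := hT v y
  simp only [smul_apply, ContinuousLinearMap.comp_apply, ContinuousLinearMap.prod_apply,
    ContinuousLinearMap.id_apply, fderivInnerCLM_apply, ← hsymm, real_inner_comm, smul_eq_mul,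
    coe_innerSL_apply]
  ring

theorem fderiv_halfQuadratic_apply (hT : (T : E →ₗ[ℝ] E).IsSymmetric) (y v : E) :
    fderiv ℝ (halfQuadratic T) y v = ⟪T y, v⟫ := by
  rw [(hasFDerivAt_halfQuadratic hT y).fderiv, innerSL_apply_apply]

theorem fderiv_fderiv_halfQuadratic_apply (hT : (T : E →ₗ[ℝ] E).IsSymmetric) (x v w : E) :
    fderiv ℝ (fun y => fderiv ℝ (halfQuadratic T) y v) x w = ⟪T w, v⟫ := by
  have hlin : (fun y => fderiv ℝ (halfQuadratic T) y v) = (innerSL ℝ v).comp T := by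
    ext y
    simp [fderiv_halfQuadratic_apply hT, real_inner_comm]
  rw [hlin, ContinuousLinearMap.fderiv]
  simp [real_inner_comm]

theorem OrthonormalBasis.sum_sum_fderiv_mul_fderiv_fderiv_mul_fderiv_halfQuadratic
    {ι : Type*} [Fintype ι] (b : OrthonormalBasis ι ℝ E) {F G H : E →L[ℝ] E}
    (hF : (F : E →ₗ[ℝ] E).IsSymmetric) (hG : (G : E →ₗ[ℝ] E).IsSymmetric)
    (hH : (H : E →ₗ[ℝ] E).IsSymmetric) (x : E) :
    ∑ i, ∑ j, fderiv ℝ (halfQuadratic F) x (b i) *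
        fderiv ℝ (fun y => fderiv ℝ (halfQuadratic G) y (b j)) x (b i) *
        fderiv ℝ (halfQuadratic H) x (b j) = ⟪F x, G (H x)⟫ := by
  simp only [fderiv_halfQuadratic_apply hF, fderiv_halfQuadratic_apply hH,
    fderiv_fderiv_halfQuadratic_apply hG, mul_assoc, ← Finset.mul_sum]
  have hsum (i : ι) : ∑ j, ⟪G (b i), b j⟫ * ⟪H x, b j⟫ = ⟪b i, G (H x)⟫ := by
    simp only [real_inner_comm (b _) (H x), b.sum_inner_mul_inner]
    exact hG (b i) (H x)
  simp only [hsum, b.sum_inner_mul_inner]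

end QuadraticForm

section DeterminantHessians

open Matrix

def hessianReDet : Matrix (Fin 8) (Fin 8) ℝ :=
  !![0, 0, 0, 1, 0, 0, 0, 0;
     0, 0, -1, 0, 0, 0, 0, 0;
     0, -1, 0, 0, 0, 0, 0, 0;
     1, 0, 0, 0, 0, 0, 0, 0;
     0, 0, 0, 0, 0, 0, 0, -1;
     0, 0, 0, 0, 0, 0, 1, 0;
     0, 0, 0, 0, 0, 1, 0, 0;
     0, 0, 0, 0, -1, 0, 0, 0]

def hessianImDet : Matrix (Fin 8) (Fin 8) ℝ :=
  !![0, 0, 0, 0, 0, 0, 0, 1;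
     0, 0, 0, 0, 0, 0, -1, 0;
     0, 0, 0, 0, 0, -1, 0, 0;
     0, 0, 0, 0, 1, 0, 0, 0;
     0, 0, 0, 1, 0, 0, 0, 0;
     0, 0, -1, 0, 0, 0, 0, 0;
     0, -1, 0, 0, 0, 0, 0, 0;
     1, 0, 0, 0, 0, 0, 0, 0]

theorem hessianReDet_isHermitian : hessianReDet.IsHermitian := by
  rw [hessianReDet, IsHermitian, ← ext_iff]
  simp [Fin.forall_fin_succ]

theorem hessianImDet_isHermitian : hessianImDet.IsHermitian := by
  rw [hessianImDet, IsHermitian, ← ext_iff]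
  simp [Fin.forall_fin_succ]

theorem hessianReDet_mul_self : hessianReDet * hessianReDet = 1 := by
  rw [hessianReDet, ← ext_iff]
  simp [cons_mul, vecMul_cons, Fin.forall_fin_succ, one_apply]

theorem hessianImDet_mul_self : hessianImDet * hessianImDet = 1 := by
  rw [hessianImDet, ← ext_iff]
  simp [cons_mul, vecMul_cons, Fin.forall_fin_succ, one_apply]

theorem hessianImDet_mul_hessianReDet :
    hessianImDet * hessianReDet = -(hessianReDet * hessianImDet) := by
  rw [hessianReDet, hessianImDet, ← ext_iff]
  simp [cons_mul, vecMul_cons, Fin.forall_fin_succ]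

theorem halfQuadratic_hessianReDet (z : EuclideanSpace ℝ (Fin 8)) :
    halfQuadratic (toEuclideanCLM (𝕜 := ℝ) hessianReDet) z =
      z 0 * z 3 - z 1 * z 2 - (z 4 * z 7 - z 5 * z 6) := by
  rw [halfQuadratic, inner_toEuclideanCLM]
  simp only [dotProduct, mulVec, hessianReDet, of_apply, cons_val', cons_val_fin_one,
    Fin.sum_univ_eight, cons_val_zero, cons_val_one, cons_val, zero_mul, add_zero, one_mul,
    zero_add, neg_mul, mul_neg]
  ring

theorem halfQuadratic_hessianImDet (z : EuclideanSpace ℝ (Fin 8)) :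
    halfQuadratic (toEuclideanCLM (𝕜 := ℝ) hessianImDet) z =
      z 0 * z 7 + z 3 * z 4 - (z 1 * z 6 + z 2 * z 5) := by
  rw [halfQuadratic, inner_toEuclideanCLM]
  simp only [dotProduct, mulVec, hessianImDet, of_apply, cons_val', cons_val_fin_one,
    Fin.sum_univ_eight, cons_val_zero, cons_val_one, cons_val, zero_mul, add_zero, one_mul,
    zero_add, neg_mul, mul_neg]
  ring

end DeterminantHessians

theorem sum_sum_D15_mul_D215_mul_D15_halfQuadratic
    {F G H : EuclideanSpace ℝ (Fin 8) →L[ℝ] EuclideanSpace ℝ (Fin 8)}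
    (hF : (F : EuclideanSpace ℝ (Fin 8) →ₗ[ℝ] _).IsSymmetric)
    (hG : (G : EuclideanSpace ℝ (Fin 8) →ₗ[ℝ] _).IsSymmetric)
    (hH : (H : EuclideanSpace ℝ (Fin 8) →ₗ[ℝ] _).IsSymmetric) (x : EuclideanSpace ℝ (Fin 8)) :
    ∑ i, ∑ j, D15 i (halfQuadratic F) x * D215 i j (halfQuadratic G) x *
      D15 j (halfQuadratic H) x = ⟪F x, G (H x)⟫ := by
  simpa only [D15, D215, EuclideanSpace.basisFun_apply] using
    (EuclideanSpace.basisFun (Fin 8) ℝ).sum_sum_fderiv_mul_fderiv_fderiv_mul_fderiv_halfQuadratic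
      hF hG hH x

end

/-- `u = Re det, v = Im det` of a complex `2 × 2` matrix in coordinates
`(x₁,x₂,x₃,x₄,y₁,y₂,y₃,y₄)` on `ℝ⁸`: `u = x₁x₄ - x₂x₃ - (y₁y₄ - y₂y₃)`,
`v = x₁y₄ + x₄y₁ - (x₂y₃ + x₃y₂)`. Then (summation over repeated indices, `ρ = 2`):
`uᵢ u_{ij} uⱼ = 2u`, `vᵢ v_{ij} vⱼ = 2v`, `uᵢ v_{ij} uⱼ = -2v`, `vᵢ v_{ij} uⱼ = 2u`. -/
theorem stmt15 (u v : EuclideanSpace ℝ (Fin 8) → ℝ)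
    (hu : ∀ z, u z = z 0 * z 3 - z 1 * z 2 - (z 4 * z 7 - z 5 * z 6))
    (hv : ∀ z, v z = z 0 * z 7 + z 3 * z 4 - (z 1 * z 6 + z 2 * z 5))
    (x : EuclideanSpace ℝ (Fin 8)) :
    (∑ i, ∑ j, D15 i u x * D215 i j u x * D15 j u x) = 2 * u x ∧
    (∑ i, ∑ j, D15 i v x * D215 i j v x * D15 j v x) = 2 * v x ∧
    (∑ i, ∑ j, D15 i u x * D215 i j v x * D15 j u x) = -2 * v x ∧
    (∑ i, ∑ j, D15 i v x * D215 i j v x * D15 j u x) = 2 * u x := by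
  set U := Matrix.toEuclideanCLM (𝕜 := ℝ) hessianReDet
  set V := Matrix.toEuclideanCLM (𝕜 := ℝ) hessianImDet
  obtain rfl : u = halfQuadratic U := funext fun z => by rw [hu, halfQuadratic_hessianReDet]
  obtain rfl : v = halfQuadratic V := funext fun z => by rw [hv, halfQuadratic_hessianImDet]
  have hU : (U : EuclideanSpace ℝ (Fin 8) →ₗ[ℝ] _).IsSymmetric :=
    Matrix.isSymmetric_toEuclideanLin_iff.mpr hessianReDet_isHermitian
  have hV : (V : EuclideanSpace ℝ (Fin 8) →ₗ[ℝ] _).IsSymmetric :=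
    Matrix.isSymmetric_toEuclideanLin_iff.mpr hessianImDet_isHermitian
  have hUU : U * U = 1 := by rw [← map_mul, hessianReDet_mul_self, map_one]
  have hVV : V * V = 1 := by rw [← map_mul, hessianImDet_mul_self, map_one]
  have hVU : V (U x) = -U (V x) := by
    rw [← mul_apply_eq_comp, ← mul_apply_eq_comp, ← neg_apply, ← map_mul,
      ← map_mul, ← map_neg, hessianImDet_mul_hessianReDet]
  have hUiso := inner_map_map_of_isSymmetric_of_mul_self_eq_one hU hUU
  have hViso := inner_map_map_of_isSymmetric_of_mul_self_eq_one hV hVV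
  refine ⟨?_, ?_, ?_, ?_⟩
  · rw [sum_sum_D15_mul_D215_mul_D15_halfQuadratic hU hU hU, hUiso, two_mul_halfQuadratic]
  · rw [sum_sum_D15_mul_D215_mul_D15_halfQuadratic hV hV hV, hViso, two_mul_halfQuadratic]
  · rw [sum_sum_D15_mul_D215_mul_D15_halfQuadratic hU hV hU, hVU, inner_neg_right, hUiso, neg_mul,
      two_mul_halfQuadratic]
  · rw [sum_sum_D15_mul_D215_mul_D15_halfQuadratic hV hV hU, hViso, two_mul_halfQuadratic]
end

section
/- Let u, v : ℝ^N → ℝ be smooth with |∇u|² = |∇v|², ∇u·∇v = 0 everywhere, and suppose uᵢuⱼu_{ij} = ρ·u and vᵢvⱼv_{ij} = ρ·v for some function ρ. Then (∇v)ᵀ(Hess v)(∇u) = ρu, (∇u)ᵀ(Hess u)(∇v) = ρv, (∇u)ᵀ(Hess v)(∇u) = -ρv, and (∇v)ᵀ(Hess u)(∇v) = -ρu; in particular all four expressions vanish on the set {u = 0} ∩ {v = 0}. -/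
open scoped RealInnerProductSpace

section Aux

variable {N : ℕ}

local notation "E" => EuclideanSpace ℝ (Fin N)

private lemma grad_contDiff {f : E → ℝ} (hf : ContDiff ℝ (⊤ : ℕ∞) f) :
    ContDiff ℝ (⊤ : ℕ∞) (gradient f) := by
  have : gradient f = fun x => (InnerProductSpace.toDual ℝ E).symm (fderiv ℝ f x) := rfl
  rw [this]
  exact (InnerProductSpace.toDual ℝ E).symm.contDiff.comp (hf.fderiv_right (by simp))

private lemma grad_inner_fderiv {f : E → ℝ} (hf : ContDiff ℝ (⊤ : ℕ∞) f) (x a b : E) :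
    ⟪a, fderiv ℝ (gradient f) x b⟫ = fderiv ℝ (fderiv ℝ f) x b a := by
  have hdf : DifferentiableAt ℝ (fderiv ℝ f) x :=
    (hf.fderiv_right (m := (⊤ : ℕ∞)) (by simp)).differentiable (by simp) x
  have hg : DifferentiableAt ℝ (gradient f) x := (grad_contDiff hf).differentiable (by simp) x
  have h1 : (fun y => ⟪a, gradient f y⟫) = fun y => fderiv ℝ f y a := by
    funext y
    rw [real_inner_comm]
    exact InnerProductSpace.toDual_symm_apply
  have h2 : fderiv ℝ (fun y => ⟪a, gradient f y⟫) x b = ⟪a, fderiv ℝ (gradient f) x b⟫ := by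
    rw [fderiv_inner_apply ℝ (differentiableAt_const a) hg b]
    simp
  rw [← h2, h1, fderiv_clm_apply hdf (differentiableAt_const a)]
  simp

private lemma grad_symm {f : E → ℝ} (hf : ContDiff ℝ (⊤ : ℕ∞) f) (x a b : E) :
    ⟪a, fderiv ℝ (gradient f) x b⟫ = ⟪b, fderiv ℝ (gradient f) x a⟫ := by
  rw [grad_inner_fderiv hf, grad_inner_fderiv hf]
  exact (hf.contDiffAt.isSymmSndFDerivAt (by rw [minSmoothness_of_isRCLikeNormedField]; exact WithTop.coe_le_coe.mpr (le_top : (2 : ℕ∞) ≤ ⊤))).eq b a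

end Aux

/-- Let `u, v : ℝ^N → ℝ` be smooth with `|∇u|² = |∇v|²` and `∇u·∇v = 0` everywhere, and
suppose `uᵢuⱼu_{ij} = ρ·u` and `vᵢvⱼv_{ij} = ρ·v` for some function `ρ`. Then
`(∇v)ᵀ(Hess v)(∇u) = ρu`, `(∇u)ᵀ(Hess u)(∇v) = ρv`, `(∇u)ᵀ(Hess v)(∇u) = -ρv`, and
`(∇v)ᵀ(Hess u)(∇v) = -ρu`; in particular all four vanish on `{u = 0} ∩ {v = 0}`. -/
theorem stmt17 (N : ℕ) (u v : EuclideanSpace ℝ (Fin N) → ℝ) (ρ : EuclideanSpace ℝ (Fin N) → ℝ)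
    (hu : ContDiff ℝ (⊤ : ℕ∞) u) (hv : ContDiff ℝ (⊤ : ℕ∞) v)
    (h1 : ∀ x, ⟪gradient u x, gradient u x⟫ = ⟪gradient v x, gradient v x⟫)
    (h2 : ∀ x, ⟪gradient u x, gradient v x⟫ = 0)
    (hρu : ∀ x, ⟪gradient u x, fderiv ℝ (gradient u) x (gradient u x)⟫ = ρ x * u x)
    (hρv : ∀ x, ⟪gradient v x, fderiv ℝ (gradient v) x (gradient v x)⟫ = ρ x * v x) :
    ∀ x,
      ⟪gradient v x, fderiv ℝ (gradient v) x (gradient u x)⟫ = ρ x * u x ∧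
      ⟪gradient u x, fderiv ℝ (gradient u) x (gradient v x)⟫ = ρ x * v x ∧
      ⟪gradient u x, fderiv ℝ (gradient v) x (gradient u x)⟫ = -(ρ x * v x) ∧
      ⟪gradient v x, fderiv ℝ (gradient u) x (gradient v x)⟫ = -(ρ x * u x) ∧
      (u x = 0 → v x = 0 →
        ⟪gradient v x, fderiv ℝ (gradient v) x (gradient u x)⟫ = 0 ∧
        ⟪gradient u x, fderiv ℝ (gradient u) x (gradient v x)⟫ = 0 ∧
        ⟪gradient u x, fderiv ℝ (gradient v) x (gradient u x)⟫ = 0 ∧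
        ⟪gradient v x, fderiv ℝ (gradient u) x (gradient v x)⟫ = 0) := by
  intro x
  have hgu : ContDiff ℝ (⊤ : ℕ∞) (gradient u) := grad_contDiff hu
  have hgv : ContDiff ℝ (⊤ : ℕ∞) (gradient v) := grad_contDiff hv
  have hdu : ∀ y, DifferentiableAt ℝ (gradient u) y := fun y => (hgu.differentiable (by simp)) y
  have hdv : ∀ y, DifferentiableAt ℝ (gradient v) y := fun y => (hgv.differentiable (by simp)) y
  -- differentiate h1
  have key1 : ∀ w : EuclideanSpace ℝ (Fin N),
      ⟪gradient u x, fderiv ℝ (gradient u) x w⟫ = ⟪gradient v x, fderiv ℝ (gradient v) x w⟫ := by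
    intro w
    have hfun : (fun y => ⟪gradient u y, gradient u y⟫) = fun y => ⟪gradient v y, gradient v y⟫ :=
      funext h1
    have heq : fderiv ℝ (fun y => ⟪gradient u y, gradient u y⟫) x
        = fderiv ℝ (fun y => ⟪gradient v y, gradient v y⟫) x := by rw [hfun]
    have this := DFunLike.congr_fun heq w
    rw [fderiv_inner_apply ℝ (hdu x) (hdu x) w, fderiv_inner_apply ℝ (hdv x) (hdv x) w] at this
    have a := real_inner_comm (gradient u x) (fderiv ℝ (gradient u) x w)
    have b := real_inner_comm (gradient v x) (fderiv ℝ (gradient v) x w)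
    linarith
  -- differentiate h2
  have key2 : ∀ w : EuclideanSpace ℝ (Fin N),
      ⟪gradient u x, fderiv ℝ (gradient v) x w⟫
        + ⟪gradient v x, fderiv ℝ (gradient u) x w⟫ = 0 := by
    intro w
    have hfun : (fun y => ⟪gradient u y, gradient v y⟫) = fun _ => (0 : ℝ) := funext h2
    have heq : fderiv ℝ (fun y => ⟪gradient u y, gradient v y⟫) x
        = fderiv ℝ (fun _ => (0:ℝ)) x := by rw [hfun]
    have this := DFunLike.congr_fun heq w
    rw [fderiv_inner_apply ℝ (hdu x) (hdv x) w, fderiv_const_apply] at this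
    simp only [Pi.zero_apply, ContinuousLinearMap.zero_apply] at this
    have c := real_inner_comm (gradient v x) (fderiv ℝ (gradient u) x w)
    linarith
  have e1 : ⟪gradient v x, fderiv ℝ (gradient v) x (gradient u x)⟫ = ρ x * u x := by
    rw [← key1 (gradient u x)]; exact hρu x
  have e2 : ⟪gradient u x, fderiv ℝ (gradient u) x (gradient v x)⟫ = ρ x * v x := by
    rw [key1 (gradient v x)]; exact hρv x
  have e3 : ⟪gradient u x, fderiv ℝ (gradient v) x (gradient u x)⟫ = -(ρ x * v x) := by
    have h := key2 (gradient u x)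
    have hs : ⟪gradient v x, fderiv ℝ (gradient u) x (gradient u x)⟫
        = ⟪gradient u x, fderiv ℝ (gradient u) x (gradient v x)⟫ := grad_symm hu x _ _
    rw [hs, e2] at h; linarith
  have e4 : ⟪gradient v x, fderiv ℝ (gradient u) x (gradient v x)⟫ = -(ρ x * u x) := by
    have h := key2 (gradient v x)
    have hs : ⟪gradient u x, fderiv ℝ (gradient v) x (gradient v x)⟫
        = ⟪gradient v x, fderiv ℝ (gradient v) x (gradient u x)⟫ := grad_symm hv x _ _
    rw [hs, e1] at h; linarith
  exact ⟨e1, e2, e3, e4, fun hu0 hv0 => by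
    rw [e1, e2, e3, e4, hu0, hv0]; norm_num⟩
end
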